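/- The chromatic number of the n-dimensional associahedron is asymptotically n ln n; that is, the limit as n tends to infinity of α_n/(n ln n) equals 1. -/

import Mathlib

/-- A segment of `[n]₀ = {0,...,n}`: a set `[a,b] = {x : a ≤ x ≤ b}` with
`0 ≤ a ≤ b ≤ n` that is a proper subset of `[n]₀`. -/
def IsSegment (n : ℕ) (S : Finset ℕ) : Prop :=
  ∃ a b : ℕ, a ≤ b ∧ b ≤ n ∧ S = Finset.Icc a b ∧ S ⊂ Finset.range (n + 1)

/-- The segment `[a,b]` precedes the segment `[c,d]` when `a+1 ≤ c ≤ b+1` and `b < d`. -/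
def SegPrecedes (n : ℕ) (S T : Finset ℕ) : Prop :=
  ∃ a b c d : ℕ, a ≤ b ∧ b ≤ n ∧ c ≤ d ∧ d ≤ n ∧
    S = Finset.Icc a b ∧ T = Finset.Icc c d ∧ a + 1 ≤ c ∧ c ≤ b + 1 ∧ b < d

/-- Two segments are separated when one of them precedes the other. -/
def SegSeparated (n : ℕ) (S T : Finset ℕ) : Prop :=
  SegPrecedes n S T ∨ SegPrecedes n T S

/-- A proper colouring of the `n`-dimensional associahedron with `m` colours:
a function from the segments of `[n]₀` to `{1,...,m}` such that any two distinct
segments of the same colour are separated. -/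
def IsProperColouringAssoc (n m : ℕ) (f : Finset ℕ → ℕ) : Prop :=
  (∀ S, IsSegment n S → f S ∈ Finset.Icc 1 m) ∧
  ∀ S T, IsSegment n S → IsSegment n T → S ≠ T → f S = f T → SegSeparated n S T

/-- The chromatic number `α_n` of the `n`-dimensional associahedron: the least `m`
for which a proper colouring with `m` colours exists. -/
noncomputable def assocChromatic (n : ℕ) : ℕ :=
  sInf {m : ℕ | ∃ f : Finset ℕ → ℕ, IsProperColouringAssoc n m f}

/-!
The segments of a colour class are pairwise separated, and a class containing `[a, b]` has at
most `b - a + 2` members. Giving `[a, b]` the weight `1 / (b - a + 2)`, each class weighs at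
most `1`, so `α_n` is at least the total weight; the segments not containing `n` alone weigh
`∑ₜ (n - t) / (t + 2) = n H_n + O(n)`.
Conversely, colouring `[a, a + ℓ]` by `(ℓ, ⌊a / (ℓ + 1)⌋)` is proper and uses
`∑_ℓ (⌊n / (ℓ + 1)⌋ + 1) = n H_n + O(n)` colours. Since `H_n = ln n + O(1)`, both bounds are
`n ln n + O(n)`.
-/

open Finset Filter Topology

lemma Finset.Icc_eq_Icc_iff {α : Type*} [PartialOrder α] [LocallyFiniteOrder α] {a b c d : α}
    (h : a ≤ b) : Finset.Icc a b = Finset.Icc c d ↔ a = c ∧ b = d := by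
  rw [← Finset.coe_inj, Finset.coe_Icc, Finset.coe_Icc, Set.Icc_eq_Icc_iff h]

def segPairs (n : ℕ) : Finset (ℕ × ℕ) :=
  {p ∈ range (n + 1) ×ˢ range (n + 1) | p.1 ≤ p.2 ∧ p ≠ (0, n)}

lemma mem_segPairs {n : ℕ} {p : ℕ × ℕ} :
    p ∈ segPairs n ↔ p.1 ≤ p.2 ∧ p.2 ≤ n ∧ p ≠ (0, n) := by
  simp only [segPairs, mem_filter, mem_product, mem_range, Nat.lt_succ_iff]
  exact ⟨fun ⟨⟨_, h₂⟩, h₁₂, hne⟩ => ⟨h₁₂, h₂, hne⟩,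
    fun ⟨h₁₂, h₂, hne⟩ => ⟨⟨h₁₂.trans h₂, h₂⟩, h₁₂, hne⟩⟩

lemma isSegment_iff {n : ℕ} {S : Finset ℕ} :
    IsSegment n S ↔ ∃ p ∈ segPairs n, S = Icc p.1 p.2 := by
  have hrange : range (n + 1) = Icc 0 n := by ext; simp
  constructor
  · rintro ⟨a, b, hab, hbn, rfl, hsub⟩
    refine ⟨(a, b), mem_segPairs.2 ⟨hab, hbn, ?_⟩, rfl⟩
    rintro ⟨rfl, rfl⟩
    exact hsub.ne hrange.symm
  · rintro ⟨⟨a, b⟩, hp, rfl⟩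
    obtain ⟨hab, hbn, hne⟩ := mem_segPairs.1 hp
    refine ⟨a, b, hab, hbn, rfl, ?_⟩
    rw [hrange, ssubset_iff_subset_ne, Ne, Finset.Icc_eq_Icc_iff hab]
    exact ⟨Icc_subset_Icc (Nat.zero_le a) hbn, fun h => hne (Prod.ext h.1 h.2)⟩

def PairPrecedes (p q : ℕ × ℕ) : Prop :=
  p.1 < q.1 ∧ q.1 ≤ p.2 + 1 ∧ p.2 < q.2

def PairSeparated (p q : ℕ × ℕ) : Prop :=
  PairPrecedes p q ∨ PairPrecedes q p

lemma segPrecedes_Icc_iff {n : ℕ} {p q : ℕ × ℕ} (hp : p ∈ segPairs n) (hq : q ∈ segPairs n) :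
    SegPrecedes n (Icc p.1 p.2) (Icc q.1 q.2) ↔ PairPrecedes p q := by
  obtain ⟨hp₁, hp₂, -⟩ := mem_segPairs.1 hp
  obtain ⟨hq₁, hq₂, -⟩ := mem_segPairs.1 hq
  constructor
  · rintro ⟨a, b, c, d, hab, -, hcd, -, hS, hT, hac, hcb, hbd⟩
    obtain ⟨rfl, rfl⟩ := (Finset.Icc_eq_Icc_iff hp₁).1 hS
    obtain ⟨rfl, rfl⟩ := (Finset.Icc_eq_Icc_iff hq₁).1 hT
    exact ⟨hac, hcb, hbd⟩
  · rintro ⟨hac, hcb, hbd⟩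
    exact ⟨p.1, p.2, q.1, q.2, hp₁, hp₂, hq₁, hq₂, rfl, rfl, hac, hcb, hbd⟩

lemma segSeparated_Icc_iff {n : ℕ} {p q : ℕ × ℕ} (hp : p ∈ segPairs n) (hq : q ∈ segPairs n) :
    SegSeparated n (Icc p.1 p.2) (Icc q.1 q.2) ↔ PairSeparated p q :=
  or_congr (segPrecedes_Icc_iff hp hq) (segPrecedes_Icc_iff hq hp)

def IsPairColouring {α : Type*} (n : ℕ) (C : Finset α) (κ : ℕ × ℕ → α) : Prop :=
  (∀ p ∈ segPairs n, κ p ∈ C) ∧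
    (segPairs n : Set (ℕ × ℕ)).Pairwise fun p q => κ p = κ q → PairSeparated p q

lemma IsProperColouringAssoc.isPairColouring {n m : ℕ} {f : Finset ℕ → ℕ}
    (hf : IsProperColouringAssoc n m f) :
    IsPairColouring n (Icc 1 m) fun p => f (Icc p.1 p.2) := by
  refine ⟨fun p hp => hf.1 _ (isSegment_iff.2 ⟨p, hp, rfl⟩), fun p hp q hq hpq hfpq => ?_⟩
  refine (segSeparated_Icc_iff hp hq).1 (hf.2 _ _ (isSegment_iff.2 ⟨p, hp, rfl⟩)
    (isSegment_iff.2 ⟨q, hq, rfl⟩) ?_ hfpq)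
  rw [Ne, Finset.Icc_eq_Icc_iff (mem_segPairs.1 hp).1]
  exact fun h => hpq (Prod.ext h.1 h.2)

noncomputable def endpoints (S : Finset ℕ) : ℕ × ℕ :=
  (sInf (S : Set ℕ), sSup (S : Set ℕ))

lemma endpoints_Icc {a b : ℕ} (hab : a ≤ b) : endpoints (Icc a b) = (a, b) := by
  rw [endpoints, coe_Icc, csInf_Icc hab, csSup_Icc hab]

lemma IsPairColouring.exists_isProperColouringAssoc {α : Type*} {n : ℕ} {C : Finset α}
    {κ : ℕ × ℕ → α} (hκ : IsPairColouring n C κ) :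
    ∃ f : Finset ℕ → ℕ, IsProperColouringAssoc n C.card f := by
  classical
  let code : α → ℕ := fun c => if h : c ∈ C then C.equivFin ⟨c, h⟩ + 1 else 0
  have code_mem : ∀ c ∈ C, code c ∈ Icc 1 C.card := fun c hc => by
    simp only [code, dif_pos hc, mem_Icc]
    have := (C.equivFin ⟨c, hc⟩).isLt
    omega
  have code_inj : ∀ c ∈ C, ∀ d ∈ C, code c = code d → c = d := fun c hc d hd h => by
    simp only [code, dif_pos hc, dif_pos hd, add_left_inj, Fin.val_inj,
      Equiv.apply_eq_iff_eq, Subtype.mk.injEq] at h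
    exact h
  refine ⟨fun S => code (κ (endpoints S)), ?_, ?_⟩
  · rintro S hS
    obtain ⟨p, hp, rfl⟩ := isSegment_iff.1 hS
    simp only [endpoints_Icc (mem_segPairs.1 hp).1]
    exact code_mem _ (hκ.1 p hp)
  · rintro S T hS hT hST hcol
    obtain ⟨p, hp, rfl⟩ := isSegment_iff.1 hS
    obtain ⟨q, hq, rfl⟩ := isSegment_iff.1 hT
    simp only [endpoints_Icc (mem_segPairs.1 hp).1, endpoints_Icc (mem_segPairs.1 hq).1] at hcol
    exact (segSeparated_Icc_iff hp hq).2 (hκ.2 hp hq (fun h => hST (h ▸ rfl))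
      (code_inj _ (hκ.1 p hp) _ (hκ.1 q hq) hcol))

lemma assocChromatic_le_card {α : Type*} {n : ℕ} {C : Finset α} {κ : ℕ × ℕ → α}
    (hκ : IsPairColouring n C κ) : assocChromatic n ≤ C.card :=
  Nat.sInf_le hκ.exists_isProperColouringAssoc

/-- Two segments of the same length `ℓ` whose left endpoints lie in the same block of `ℓ + 1`
consecutive integers are separated. -/
def blockColour (p : ℕ × ℕ) : Σ _ : ℕ, ℕ :=
  ⟨p.2 - p.1, p.1 / (p.2 - p.1 + 1)⟩

def blockColours (n : ℕ) : Finset (Σ _ : ℕ, ℕ) :=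
  (range (n + 1)).sigma fun ℓ => range (n / (ℓ + 1) + 1)

lemma pairPrecedes_of_blockColour_eq {p q : ℕ × ℕ} (hp : p.1 ≤ p.2) (hq : q.1 ≤ q.2)
    (hcol : blockColour p = blockColour q) (hlt : p.1 < q.1) : PairPrecedes p q := by
  simp only [blockColour, Sigma.mk.injEq, heq_eq_eq] at hcol
  obtain ⟨hlen, hblock⟩ := hcol
  rw [← hlen] at hblock
  have h₁ := Nat.lt_div_mul_add (a := q.1) (b := p.2 - p.1 + 1) (by omega)
  have h₂ := Nat.div_mul_le_self p.1 (p.2 - p.1 + 1)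
  rw [← hblock] at h₁
  refine ⟨hlt, ?_, ?_⟩ <;> omega

lemma isPairColouring_blockColour (n : ℕ) :
    IsPairColouring n (blockColours n) blockColour := by
  refine ⟨fun p hp => ?_, fun p hp q hq hpq hcol => ?_⟩
  · obtain ⟨hp₁, hp₂, -⟩ := mem_segPairs.1 hp
    simp only [blockColours, blockColour, mem_sigma, mem_range, Nat.lt_succ_iff]
    exact ⟨by omega, Nat.div_le_div_right (hp₁.trans hp₂)⟩
  · obtain ⟨hp₁, -, -⟩ := mem_segPairs.1 hp
    obtain ⟨hq₁, -, -⟩ := mem_segPairs.1 hq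
    rcases lt_trichotomy p.1 q.1 with hlt | heq | hgt
    · exact Or.inl (pairPrecedes_of_blockColour_eq hp₁ hq₁ hcol hlt)
    · simp only [blockColour, Sigma.mk.injEq] at hcol
      exact absurd (Prod.ext heq (by omega)) hpq
    · exact Or.inr (pairPrecedes_of_blockColour_eq hq₁ hp₁ hcol.symm hgt)

lemma assocChromatic_le_harmonic (n : ℕ) :
    (assocChromatic n : ℝ) ≤ n * harmonic (n + 1) + n + 1 := by
  have hcard : (#(blockColours n) : ℝ) = ∑ ℓ ∈ range (n + 1), (((n / (ℓ + 1) : ℕ) : ℝ) + 1) := by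
    simp [blockColours, card_sigma]
  calc (assocChromatic n : ℝ) ≤ #(blockColours n) := by
        exact_mod_cast assocChromatic_le_card (isPairColouring_blockColour n)
    _ ≤ ∑ ℓ ∈ range (n + 1), ((n : ℝ) / (ℓ + 1 : ℕ) + 1) :=
        hcard ▸ sum_le_sum fun ℓ _ => by gcongr; exact Nat.cast_div_le
    _ = n * harmonic (n + 1) + n + 1 := by
        simp [sum_add_distrib, harmonic, mul_sum, div_eq_mul_inv]
        ring

lemma exists_isProperColouringAssoc_assocChromatic (n : ℕ) :
    ∃ f : Finset ℕ → ℕ, IsProperColouringAssoc n (assocChromatic n) f :=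
  Nat.sInf_mem (s := {m | ∃ f : Finset ℕ → ℕ, IsProperColouringAssoc n m f})
    ⟨_, (isPairColouring_blockColour n).exists_isProperColouringAssoc⟩

/-- Any other member of `T` either starts in `(p.1, p.2 + 1]` or ends in `[p.1 - 1, p.2)`;
recording that position (shifted by `2` in the second case) is injective. -/
lemma card_le_of_pairwise_separated {T : Finset (ℕ × ℕ)}
    (hT : (T : Set (ℕ × ℕ)).Pairwise PairSeparated) {p : ℕ × ℕ} (hp : p ∈ T) :
    #T ≤ p.2 - p.1 + 2 := by
  have key : #(T.erase p) ≤ #(Icc (p.1 + 1) (p.2 + 1)) := by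
    refine card_le_card_of_injOn (fun x => if p.1 < x.1 then x.1 else x.2 + 2) ?_ ?_
    · intro x hx
      have hs := hT (mem_of_mem_erase hx) hp (ne_of_mem_erase hx)
      simp only [PairSeparated, PairPrecedes] at hs
      simp only [coe_Icc, Set.mem_Icc]
      split_ifs <;> omega
    · intro x hx y hy hxy
      by_contra hne
      have hsx := hT (mem_of_mem_erase hx) hp (ne_of_mem_erase hx)
      have hsy := hT (mem_of_mem_erase hy) hp (ne_of_mem_erase hy)
      have hsxy := hT (mem_of_mem_erase hx) (mem_of_mem_erase hy) hne
      simp only [PairSeparated, PairPrecedes] at hsx hsy hsxy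
      dsimp only at hxy
      split_ifs at hxy <;> omega
  rw [card_erase_of_mem hp, Nat.card_Icc] at key
  have := card_pos.2 ⟨p, hp⟩
  omega

noncomputable def segWeight (p : ℕ × ℕ) : ℝ :=
  ((p.2 - p.1 + 2 : ℕ) : ℝ)⁻¹

lemma sum_segWeight_le_one {T : Finset (ℕ × ℕ)}
    (hT : (T : Set (ℕ × ℕ)).Pairwise PairSeparated) : ∑ p ∈ T, segWeight p ≤ 1 := by
  calc ∑ p ∈ T, segWeight p ≤ #T • (#T : ℝ)⁻¹ :=
        sum_le_card_nsmul _ _ _ fun p hp => inv_anti₀ (by exact_mod_cast card_pos.2 ⟨p, hp⟩)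
          (by exact_mod_cast card_le_of_pairwise_separated hT hp)
    _ ≤ 1 := by rw [nsmul_eq_mul]; exact mul_inv_le_one

lemma IsPairColouring.sum_segWeight_le {α : Type*} {n : ℕ} {C : Finset α} {κ : ℕ × ℕ → α}
    (hκ : IsPairColouring n C κ) : ∑ p ∈ segPairs n, segWeight p ≤ #C := by
  classical
  rw [← sum_fiberwise_of_maps_to hκ.1]
  calc ∑ c ∈ C, ∑ p ∈ segPairs n with κ p = c, segWeight p ≤ ∑ _c ∈ C, (1 : ℝ) := by
        refine sum_le_sum fun c _ => sum_segWeight_le_one fun p hp q hq hpq => ?_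
        simp only [mem_coe, mem_filter] at hp hq
        exact hκ.2 hp.1 hq.1 hpq (hp.2.trans hq.2.symm)
    _ = #C := by simp

lemma sum_segWeight_le_assocChromatic (n : ℕ) :
    ∑ p ∈ segPairs n, segWeight p ≤ assocChromatic n := by
  obtain ⟨f, hf⟩ := exists_isProperColouringAssoc_assocChromatic n
  simpa using hf.isPairColouring.sum_segWeight_le

lemma sum_range_inv_add_two (n : ℕ) :
    ∑ t ∈ range n, ((t : ℝ) + 2)⁻¹ = harmonic (n + 1) - 1 := by
  rw [harmonic, Rat.cast_sum, sum_range_succ']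
  push_cast
  ring_nf

lemma le_sum_segWeight (n : ℕ) :
    (n + 2 : ℝ) * (harmonic (n + 1) - 1) - n ≤ ∑ p ∈ segPairs n, segWeight p := by
  -- the segments `[a, a + t]` with `a + t < n`
  let short : Finset (ℕ × ℕ) :=
    ((range n).sigma fun t => range (n - t)).image fun x => (x.2, x.2 + x.1)
  have hsub : short ⊆ segPairs n := by
    simp only [short, subset_iff, mem_image, mem_sigma, mem_range, mem_segPairs]
    rintro _ ⟨⟨t, a⟩, ⟨ht, ha⟩, rfl⟩
    dsimp only at ht ha ⊢
    refine ⟨by omega, by omega, fun h => ?_⟩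
    simp only [Prod.mk.injEq] at h
    omega
  have hinj : Set.InjOn (fun x : Σ _ : ℕ, ℕ => (x.2, x.2 + x.1))
      ((range n).sigma fun t => range (n - t)) := by
    rintro ⟨t, a⟩ - ⟨s, b⟩ - h
    simp only [Prod.mk.injEq] at h
    obtain ⟨rfl, h⟩ := h
    obtain rfl : t = s := by omega
    rfl
  calc (n + 2 : ℝ) * (harmonic (n + 1) - 1) - n
      = ∑ t ∈ range n, ((n - t : ℕ) : ℝ) * ((t : ℝ) + 2)⁻¹ := by
        have hterm : ∀ t ∈ range n,
            ((n - t : ℕ) : ℝ) * ((t : ℝ) + 2)⁻¹ = (n + 2) * ((t : ℝ) + 2)⁻¹ - 1 := by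
          intro t ht
          rw [Nat.cast_sub (mem_range.1 ht).le]
          field_simp
          ring
        rw [sum_congr rfl hterm, sum_sub_distrib, ← mul_sum, sum_range_inv_add_two]
        simp
    _ = ∑ p ∈ short, segWeight p := by
        rw [sum_image hinj, sum_sigma]
        refine sum_congr rfl fun t _ => ?_
        simp [segWeight]
    _ ≤ ∑ p ∈ segPairs n, segWeight p :=
        sum_le_sum_of_subset_of_nonneg hsub fun _ _ _ => inv_nonneg.2 (Nat.cast_nonneg _)

lemma natCast_mul_log_add_one_le (n : ℕ) : n * Real.log (n + 1) ≤ n * Real.log n + 1 := by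
  rcases Nat.eq_zero_or_pos n with rfl | hn
  · simp
  have hn' : (0 : ℝ) < n := by exact_mod_cast hn
  have hratio : Real.log (n + 1) - Real.log n ≤ 1 / n := by
    rw [← Real.log_div (by positivity) hn'.ne']
    calc Real.log ((n + 1) / n) ≤ (n + 1) / n - 1 := Real.log_le_sub_one_of_pos (by positivity)
      _ = 1 / n := by field_simp; ring
  have := mul_le_mul_of_nonneg_left hratio hn'.le
  rw [mul_one_div_cancel hn'.ne'] at this
  linarith

lemma abs_assocChromatic_sub_le {n : ℕ} (hn : 1 ≤ n) :
    |(assocChromatic n : ℝ) - n * Real.log n| ≤ 4 * n := by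
  have hn' : (1 : ℝ) ≤ n := by exact_mod_cast hn
  have hlog_nonneg : 0 ≤ Real.log n := Real.log_natCast_nonneg n
  have hlog_le : Real.log n ≤ harmonic (n + 1) :=
    calc Real.log n ≤ Real.log ((n + 1 : ℕ) + 1 : ℕ) :=
          Real.log_le_log (by positivity) (by push_cast; linarith)
      _ ≤ harmonic (n + 1) := log_add_one_le_harmonic (n + 1)
  have hle_log : (harmonic (n + 1) : ℝ) ≤ 1 + Real.log (n + 1) := by
    exact_mod_cast harmonic_le_one_add_log (n + 1)
  have hlower := (le_sum_segWeight n).trans (sum_segWeight_le_assocChromatic n)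
  have hupper := assocChromatic_le_harmonic n
  have := natCast_mul_log_add_one_le n
  rw [abs_le]
  constructor <;> nlinarith

/-- Theorem (asymptotics): `α_n ∼ n ln n`, i.e. `α_n / (n ln n) → 1` as `n → ∞`. -/
theorem assocChromatic_asymptotic :
    Filter.Tendsto (fun n : ℕ => (assocChromatic n : ℝ) / ((n : ℝ) * Real.log n))
      Filter.atTop (nhds 1) := by
  have hlog : Tendsto (fun n : ℕ => Real.log n) atTop atTop :=
    Real.tendsto_log_atTop.comp tendsto_natCast_atTop_atTop
  rw [tendsto_iff_norm_sub_tendsto_zero]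
  refine squeeze_zero' (Eventually.of_forall fun _ => norm_nonneg _) ?_
    (tendsto_const_nhds.div_atTop hlog : Tendsto (fun n : ℕ => 4 / Real.log n) atTop (𝓝 0))
  filter_upwards [eventually_ge_atTop 2] with n hn
  have hlog_pos : 0 < Real.log n := Real.log_pos (by exact_mod_cast hn)
  have hpos : 0 < (n : ℝ) * Real.log n := mul_pos (by positivity) hlog_pos
  rw [Real.norm_eq_abs, div_sub_one hpos.ne', abs_div, abs_of_pos hpos,
    div_le_div_iff₀ hpos hlog_pos]
  calc |(assocChromatic n : ℝ) - n * Real.log n| * Real.log n ≤ 4 * n * Real.log n :=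
        mul_le_mul_of_nonneg_right (abs_assocChromatic_sub_le (by omega)) hlog_pos.le
    _ = 4 * (n * Real.log n) := mul_assoc _ _ _
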